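/- arXiv:2506.11644 — 3 statements merged into one kernel-verified Lean document; each statement's English description precedes it below -/
import Mathlib

section
/- For every integer k ≥ 2, a finite simple graph with m edges contains at most m^(k/2) copies of the complete graph K_k (i.e., the number of k-cliques is at most m^(k/2)). -/
open Finset SimpleGraph

private lemma kkb_poly_ineq (s d D : ℝ) (hs : 0 ≤ s) (hd : 1 ≤ d) (hD : 2*D = d*(d-1))
    (hDs : D ≤ s^2) : s^6 + 2*D*s^3 + D^2 ≤ (s^2+d)^3 := by
  nlinarith [sq_nonneg (s^2 - s*d), sq_nonneg (s^2 - s*(d-1)), sq_nonneg (s*d - s), sq_nonneg s,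
    mul_nonneg hs (sq_nonneg d), sq_nonneg (2*s^2 - d*(d-1)), mul_nonneg (mul_nonneg hs hs) hs,
    sq_nonneg (s - d), sq_nonneg (s*(d-1) - s^2)]

private lemma kkb_core_ineq (A d D : ℝ) (hA : 0 ≤ A) (hd : 1 ≤ d) (hD : 2*D = d*(d-1))
    (hDA : D ≤ A) : Real.sqrt (A^3) + D ≤ Real.sqrt ((A+d)^3) := by
  have hD0 : 0 ≤ D := by nlinarith
  have hs : (0:ℝ) ≤ Real.sqrt A := Real.sqrt_nonneg A
  set s := Real.sqrt A with hsdef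
  have hA' : A = s^2 := (Real.sq_sqrt hA).symm
  have h1 : Real.sqrt (A^3) = s^3 := by
    rw [hA', show (s^2)^3 = (s^3)^2 by ring, Real.sqrt_sq (pow_nonneg hs 3)]
  rw [h1]
  refine Real.le_sqrt_of_sq_le ?_
  have hDs : D ≤ s^2 := hA' ▸ hDA
  calc (s^3 + D)^2 = s^6 + 2*D*s^3 + D^2 := by ring
    _ ≤ (s^2+d)^3 := kkb_poly_ineq s d D hs hd hD hDs
    _ = (A+d)^3 := by rw [hA']

private lemma kkb_key_ineq (A B d : ℝ) (j : ℕ) (hA : 0 ≤ A) (hB : 0 ≤ B) (hd : 1 ≤ d)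
    (hBA : B ≤ A) (hBd : 2*B ≤ d*(d-1)) (hdA : d*(d-1) ≤ 2*A) :
    Real.sqrt (A^(j+3)) + Real.sqrt (B^(j+2)) ≤ Real.sqrt ((A+d)^(j+3)) := by
  set D : ℝ := d*(d-1)/2 with hDdef
  have hD : 2*D = d*(d-1) := by ring
  have hDA : D ≤ A := by linarith
  have hBD : B ≤ D := by linarith
  have hD0 : 0 ≤ D := by nlinarith
  have e1 : Real.sqrt (A^(j+3)) = Real.sqrt (A^j) * Real.sqrt (A^3) := by
    rw [← Real.sqrt_mul (pow_nonneg hA j), ← pow_add]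
  have e2 : Real.sqrt (B^(j+2)) = Real.sqrt (B^j) * B := by
    rw [show B^(j+2) = B^j * B^2 by ring, Real.sqrt_mul (pow_nonneg hB j), Real.sqrt_sq hB]
  have e3 : Real.sqrt ((A+d)^(j+3)) = Real.sqrt ((A+d)^j) * Real.sqrt ((A+d)^3) := by
    rw [← Real.sqrt_mul (pow_nonneg (by linarith) j), ← pow_add]
  rw [e1, e2, e3]
  have hsj : Real.sqrt (B^j) ≤ Real.sqrt (A^j) :=
    Real.sqrt_le_sqrt (pow_le_pow_left₀ hB hBA j)
  calc Real.sqrt (A^j) * Real.sqrt (A^3) + Real.sqrt (B^j) * B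
      ≤ Real.sqrt (A^j) * Real.sqrt (A^3) + Real.sqrt (A^j) * D :=
        add_le_add_right (mul_le_mul hsj hBD hB (Real.sqrt_nonneg _)) _
    _ = Real.sqrt (A^j) * (Real.sqrt (A^3) + D) := by ring
    _ ≤ Real.sqrt ((A+d)^j) * Real.sqrt ((A+d)^3) := by
        refine mul_le_mul ?_ (kkb_core_ineq A d D hA hd hD hDA) (by positivity)
          (Real.sqrt_nonneg _)
        exact Real.sqrt_le_sqrt (pow_le_pow_left₀ hA (by linarith) j)

section Graphs

variable {V : Type*} [Fintype V] [DecidableEq V]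

/-- The graph obtained by deleting all edges at `v`. -/
private def kkbDel (G : SimpleGraph V) (v : V) : SimpleGraph V where
  Adj a b := G.Adj a b ∧ a ≠ v ∧ b ≠ v
  symm := ⟨fun a b ⟨h, ha, hb⟩ => ⟨h.symm, hb, ha⟩⟩
  loopless := ⟨fun a ⟨h, _, _⟩ => G.loopless.irrefl a h⟩

/-- The link graph of `v` : edges of `G` whose both endpoints are neighbors of `v`. -/
private def kkbLink (G : SimpleGraph V) (v : V) : SimpleGraph V where
  Adj a b := G.Adj a b ∧ G.Adj v a ∧ G.Adj v b
  symm := ⟨fun a b ⟨h, ha, hb⟩ => ⟨h.symm, hb, ha⟩⟩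
  loopless := ⟨fun a ⟨h, _, _⟩ => G.loopless.irrefl a h⟩

private instance kkbDel.instDec (G : SimpleGraph V) [DecidableRel G.Adj] (v : V) :
    DecidableRel (kkbDel G v).Adj :=
  fun a b => inferInstanceAs (Decidable (G.Adj a b ∧ a ≠ v ∧ b ≠ v))

private instance kkbLink.instDec (G : SimpleGraph V) [DecidableRel G.Adj] (v : V) :
    DecidableRel (kkbLink G v).Adj :=
  fun a b => inferInstanceAs (Decidable (G.Adj a b ∧ G.Adj v a ∧ G.Adj v b))

private lemma kkb_card_cliqueFinset_two (G : SimpleGraph V) [DecidableRel G.Adj] :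
    (G.cliqueFinset 2).card = G.edgeFinset.card := by
  refine (Finset.card_bij
    (fun e _ => Sym2.lift ⟨fun a b => ({a, b} : Finset V), fun a b => by
      simp [Finset.pair_comm]⟩ e) ?_ ?_ ?_).symm
  · intro e he
    induction e using Sym2.ind with
    | _ a b =>
      rw [SimpleGraph.mem_edgeFinset, SimpleGraph.mem_edgeSet] at he
      rw [SimpleGraph.mem_cliqueFinset_iff]
      refine ⟨?_, ?_⟩
      · simp only [Sym2.lift_mk, Finset.coe_insert, Finset.coe_singleton]
        exact SimpleGraph.isClique_pair.2 fun _ => he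
      · simpa using Finset.card_pair he.ne
  · intro e he e' he' h
    induction e using Sym2.ind with
    | _ a b =>
      induction e' using Sym2.ind with
      | _ c d =>
        rw [SimpleGraph.mem_edgeFinset, SimpleGraph.mem_edgeSet] at he he'
        simp only [Sym2.lift_mk] at h
        have hac : a ∈ ({c, d} : Finset V) := h ▸ (by simp)
        have hbc : b ∈ ({c, d} : Finset V) := h ▸ (by simp)
        simp only [Finset.mem_insert, Finset.mem_singleton] at hac hbc
        rw [Sym2.eq_iff]
        rcases hac with rfl | rfl
        · rcases hbc with rfl | rfl
          · exact absurd rfl he.ne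
          · exact Or.inl ⟨rfl, rfl⟩
        · rcases hbc with rfl | rfl
          · exact Or.inr ⟨rfl, rfl⟩
          · exact absurd rfl he.ne
  · intro S hS
    rw [SimpleGraph.mem_cliqueFinset_iff] at hS
    obtain ⟨a, b, hab, rfl⟩ := Finset.card_eq_two.1 hS.2
    have hadj : G.Adj a b := hS.1 (by simp) (by simp) hab
    exact ⟨s(a, b), by rwa [SimpleGraph.mem_edgeFinset, SimpleGraph.mem_edgeSet], by simp⟩

private lemma kkb_clique_split (G : SimpleGraph V) [DecidableRel G.Adj] (v : V) (k : ℕ) :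
    (G.cliqueFinset (k+1)).card ≤
      ((kkbDel G v).cliqueFinset (k+1)).card + ((kkbLink G v).cliqueFinset k).card := by
  have hsplit := Finset.card_filter_add_card_filter_not
    (s := G.cliqueFinset (k+1)) (p := fun S => v ∈ S)
  have h1 : (Finset.filter (fun S => v ∈ S) (G.cliqueFinset (k+1))).card ≤
      ((kkbLink G v).cliqueFinset k).card := by
    refine Finset.card_le_card_of_injOn (fun S => S.erase v) ?_ ?_
    · intro S hS
      simp only [Finset.mem_coe, Finset.mem_filter, SimpleGraph.mem_cliqueFinset_iff] at hS
      obtain ⟨⟨hcl, hcard⟩, hv⟩ := hS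
      rw [Finset.mem_coe, SimpleGraph.mem_cliqueFinset_iff]
      constructor
      · intro a ha b hb hab
        simp only [Finset.coe_erase, Set.mem_diff, Finset.mem_coe,
          Set.mem_singleton_iff] at ha hb
        exact ⟨hcl ha.1 hb.1 hab, hcl hv ha.1 (Ne.symm ha.2), hcl hv hb.1 (Ne.symm hb.2)⟩
      · rw [Finset.card_erase_of_mem hv, hcard]
        omega
    · intro S hS T hT h
      simp only [Finset.coe_filter, Set.mem_setOf_eq] at hS hT
      dsimp only at h
      rw [← Finset.insert_erase hS.2, ← Finset.insert_erase hT.2, h]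
  have h2 : (Finset.filter (fun S => ¬ v ∈ S) (G.cliqueFinset (k+1))).card ≤
      ((kkbDel G v).cliqueFinset (k+1)).card := by
    refine Finset.card_le_card ?_
    intro S hS
    simp only [Finset.mem_filter, SimpleGraph.mem_cliqueFinset_iff] at hS
    obtain ⟨⟨hcl, hcard⟩, hv⟩ := hS
    rw [SimpleGraph.mem_cliqueFinset_iff]
    refine ⟨fun a ha b hb hab => ⟨hcl ha hb hab, ?_, ?_⟩, hcard⟩
    · rintro rfl; exact hv ha
    · rintro rfl; exact hv hb
  omega

private lemma kkb_del_edgeFinset (G : SimpleGraph V) [DecidableRel G.Adj] (v : V) :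
    (kkbDel G v).edgeFinset = G.edgeFinset \ G.incidenceFinset v := by
  ext e
  induction e using Sym2.ind with
  | _ a b =>
    simp only [SimpleGraph.mem_edgeFinset, Finset.mem_sdiff, SimpleGraph.mem_incidenceFinset,
      SimpleGraph.mem_edgeSet, SimpleGraph.incidenceSet, Set.mem_setOf_eq]
    constructor
    · rintro ⟨h, ha, hb⟩
      refine ⟨h, fun hh => ?_⟩
      rcases hh with ⟨-, hv⟩
      rw [Sym2.mem_iff] at hv
      rcases hv with rfl | rfl
      · exact ha rfl
      · exact hb rfl
    · rintro ⟨h, hn⟩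
      refine ⟨h, fun ha => hn ⟨h, ?_⟩, fun hb => hn ⟨h, ?_⟩⟩
      · rw [Sym2.mem_iff]; exact Or.inl ha.symm
      · rw [Sym2.mem_iff]; exact Or.inr hb.symm

private lemma kkb_link_edgeFinset (G : SimpleGraph V) [DecidableRel G.Adj] (v : V) :
    (kkbLink G v).edgeFinset ⊆ G.edgeFinset \ G.incidenceFinset v := by
  intro e
  induction e using Sym2.ind with
  | _ a b =>
    simp only [SimpleGraph.mem_edgeFinset, Finset.mem_sdiff, SimpleGraph.mem_incidenceFinset,
      SimpleGraph.mem_edgeSet, SimpleGraph.incidenceSet, Set.mem_setOf_eq]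
    rintro ⟨h, ha, hb⟩
    refine ⟨h, fun hh => ?_⟩
    rcases hh with ⟨-, hv⟩
    rw [Sym2.mem_iff] at hv
    rcases hv with rfl | rfl
    · exact G.loopless.irrefl v ha
    · exact G.loopless.irrefl v hb

private lemma kkb_link_degree_bound (G : SimpleGraph V) [DecidableRel G.Adj] (v : V) :
    2 * (kkbLink G v).edgeFinset.card ≤ G.degree v * (G.degree v - 1) := by
  rw [← SimpleGraph.sum_degrees_eq_twice_card_edges]
  have h0 : ∀ u ∈ Finset.univ, u ∉ G.neighborFinset v → (kkbLink G v).degree u = 0 := by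
    intro u _ hu
    rw [← SimpleGraph.card_neighborFinset_eq_degree, Finset.card_eq_zero, Finset.eq_empty_iff_forall_notMem]
    intro w hw
    rw [SimpleGraph.mem_neighborFinset] at hw
    exact hu (by rw [SimpleGraph.mem_neighborFinset]; exact hw.2.1)
  rw [← Finset.sum_subset (Finset.subset_univ (G.neighborFinset v)) h0]
  have hdeg : ∀ u ∈ G.neighborFinset v, (kkbLink G v).degree u ≤ G.degree v - 1 := by
    intro u hu
    rw [← SimpleGraph.card_neighborFinset_eq_degree]
    have hsub : (kkbLink G v).neighborFinset u ⊆ (G.neighborFinset v).erase u := by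
      intro w hw
      rw [SimpleGraph.mem_neighborFinset] at hw
      rw [Finset.mem_erase, SimpleGraph.mem_neighborFinset]
      exact ⟨fun he => (kkbLink G v).loopless.irrefl u (he ▸ hw), hw.2.2⟩
    calc ((kkbLink G v).neighborFinset u).card ≤ ((G.neighborFinset v).erase u).card :=
          Finset.card_le_card hsub
      _ = G.degree v - 1 := by
          rw [Finset.card_erase_of_mem hu, SimpleGraph.card_neighborFinset_eq_degree]
  calc ∑ u ∈ G.neighborFinset v, (kkbLink G v).degree u
      ≤ ∑ _u ∈ G.neighborFinset v, (G.degree v - 1) := Finset.sum_le_sum hdeg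
    _ = G.degree v * (G.degree v - 1) := by
        rw [Finset.sum_const, smul_eq_mul, SimpleGraph.card_neighborFinset_eq_degree]

private lemma kkb_handshake (G : SimpleGraph V) [DecidableRel G.Adj] (v : V)
    (hmin : ∀ u, G.Adj v u → G.degree v ≤ G.degree u) :
    G.degree v * (G.degree v + 1) ≤ 2 * G.edgeFinset.card := by
  rw [← SimpleGraph.sum_degrees_eq_twice_card_edges]
  have hsub : insert v (G.neighborFinset v) ⊆ Finset.univ := Finset.subset_univ _
  have hle : ∀ u ∈ insert v (G.neighborFinset v), G.degree v ≤ G.degree u := by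
    intro u hu
    rcases Finset.mem_insert.1 hu with rfl | hu
    · exact le_refl _
    · exact hmin u (by rwa [SimpleGraph.mem_neighborFinset] at hu)
  calc G.degree v * (G.degree v + 1) = (insert v (G.neighborFinset v)).card * G.degree v := by
        rw [Finset.card_insert_of_notMem (SimpleGraph.notMem_neighborFinset_self G v),
          SimpleGraph.card_neighborFinset_eq_degree]; ring
    _ ≤ ∑ u ∈ insert v (G.neighborFinset v), G.degree u := Finset.card_nsmul_le_sum _ _ _ hle
    _ ≤ ∑ u, G.degree u := Finset.sum_le_sum_of_subset hsub

end Graphs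

private lemma kkb_aux : ∀ (n : ℕ) {V : Type u} [Fintype V] [DecidableEq V] (G : SimpleGraph V)
    [DecidableRel G.Adj] (k : ℕ), 2 ≤ k → k + G.edgeFinset.card ≤ n →
    ((G.cliqueFinset k).card : ℝ) ≤ Real.sqrt ((G.edgeFinset.card : ℝ) ^ k) := by
  intro n
  induction n using Nat.strong_induction_on with
  | _ n ih =>
    intro V _ _ G _ k hk hn
    set m := G.edgeFinset.card with hm
    rcases eq_or_lt_of_le hk with hk2 | hk3
    · -- base case k = 2
      subst hk2
      rw [kkb_card_cliqueFinset_two, show ((m:ℝ))^2 = (m:ℝ)^2 by rfl]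
      rw [Real.sqrt_sq (Nat.cast_nonneg m)]
    · obtain ⟨j, rfl⟩ : ∃ j, k = j + 3 := ⟨k - 3, by omega⟩
      rcases Nat.eq_zero_or_pos m with hm0 | hm1
      · -- no edges: no cliques
        have : G = ⊥ := SimpleGraph.edgeFinset_eq_empty.1 (Finset.card_eq_zero.1 hm0)
        subst this
        rw [SimpleGraph.cliqueFinset_eq_empty_iff.2 (SimpleGraph.cliqueFree_bot (by omega))]
        simpa using Real.sqrt_nonneg ((m : ℝ) ^ (j+3))
      · -- pick a vertex of minimum positive degree
        have hne : (Finset.univ.filter (fun u => 0 < G.degree u)).Nonempty := by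
          obtain ⟨e, he⟩ := Finset.card_pos.1 hm1
          induction e using Sym2.ind with
          | _ a b =>
            rw [SimpleGraph.mem_edgeFinset, SimpleGraph.mem_edgeSet] at he
            exact ⟨a, Finset.mem_filter.2 ⟨Finset.mem_univ a,
              (SimpleGraph.degree_pos_iff_exists_adj G a).2 ⟨b, he⟩⟩⟩
        obtain ⟨v, hv, hvmin⟩ := Finset.exists_min_image _ (fun u => G.degree u) hne
        rw [Finset.mem_filter] at hv
        set d := G.degree v with hd
        have hd1 : 1 ≤ d := hv.2
        have hmin : ∀ u, G.Adj v u → d ≤ G.degree u := by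
          intro u hu
          exact hvmin u (Finset.mem_filter.2 ⟨Finset.mem_univ u,
            (SimpleGraph.degree_pos_iff_exists_adj G u).2 ⟨v, hu.symm⟩⟩)
        have hdm : d ≤ m := by
          rw [hd, ← SimpleGraph.card_incidenceFinset_eq_degree]
          exact Finset.card_le_card fun e he =>
            SimpleGraph.mem_edgeFinset.2
              (G.incidenceSet_subset v (Set.mem_toFinset.1 he))
        -- edge counts of the two auxiliary graphs
        have hm1' : (kkbDel G v).edgeFinset.card = m - d := by
          rw [kkb_del_edgeFinset, Finset.card_sdiff_of_subset, SimpleGraph.card_incidenceFinset_eq_degree]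
          intro e he
          exact SimpleGraph.mem_edgeFinset.2
            (G.incidenceSet_subset v (Set.mem_toFinset.1 he))
        have hm2' : (kkbLink G v).edgeFinset.card ≤ m - d := by
          calc (kkbLink G v).edgeFinset.card ≤ (G.edgeFinset \ G.incidenceFinset v).card :=
                Finset.card_le_card (kkb_link_edgeFinset G v)
            _ = m - d := by
                rw [Finset.card_sdiff_of_subset, SimpleGraph.card_incidenceFinset_eq_degree]
                intro e he
                exact SimpleGraph.mem_edgeFinset.2
                  (G.incidenceSet_subset v (Set.mem_toFinset.1 he))
        have hlink := kkb_link_degree_bound G v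
        have hhand := kkb_handshake G v hmin
        -- apply the induction hypothesis
        have hn1 : 1 ≤ n := by omega
        have h1 : (((kkbDel G v).cliqueFinset (j+3)).card : ℝ) ≤
            Real.sqrt ((((kkbDel G v).edgeFinset.card : ℝ)) ^ (j+3)) := by
          refine ih (n-1) (by omega) (kkbDel G v) (j+3) (by omega) ?_
          rw [hm1']; omega
        have h2 : (((kkbLink G v).cliqueFinset (j+2)).card : ℝ) ≤
            Real.sqrt ((((kkbLink G v).edgeFinset.card : ℝ)) ^ (j+2)) := by
          refine ih (n-1) (by omega) (kkbLink G v) (j+2) (by omega) ?_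
          omega
        have hsplit := kkb_clique_split G v (j+2)
        -- numeric combination
        set m2 := (kkbLink G v).edgeFinset.card with hm2
        have hcast : ((m - d : ℕ) : ℝ) = (m : ℝ) - d := by
          push_cast [Nat.cast_sub hdm]; ring
        have hkey : Real.sqrt (((m - d : ℕ) : ℝ) ^ (j+3)) + Real.sqrt ((m2 : ℝ) ^ (j+2)) ≤
            Real.sqrt ((m : ℝ) ^ (j+3)) := by
          have := kkb_key_ineq ((m : ℝ) - d) (m2 : ℝ) (d : ℝ) j (by
              rw [← hcast]; positivity) (Nat.cast_nonneg _) (by exact_mod_cast hd1)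
            (by rw [← hcast]; exact_mod_cast hm2') (by
              have hl : ((2 * m2 : ℕ) : ℝ) ≤ ((d * (d-1) : ℕ) : ℝ) := Nat.cast_le.2 hlink
              push_cast [Nat.cast_sub hd1] at hl
              linarith) (by
              have hh : ((d * (d+1) : ℕ) : ℝ) ≤ ((2 * m : ℕ) : ℝ) := Nat.cast_le.2 hhand
              push_cast at hh
              rw [← hcast]
              push_cast [Nat.cast_sub hdm]
              nlinarith)
          rw [hcast]
          convert this using 3
          ring
        calc ((G.cliqueFinset (j+3)).card : ℝ)
            ≤ (((kkbDel G v).cliqueFinset (j+3)).card : ℝ) +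
              (((kkbLink G v).cliqueFinset (j+2)).card : ℝ) := by
              have := hsplit
              push_cast
              exact_mod_cast this
          _ ≤ Real.sqrt ((((kkbDel G v).edgeFinset.card : ℝ)) ^ (j+3)) +
              Real.sqrt ((m2 : ℝ) ^ (j+2)) := add_le_add h1 h2
          _ ≤ Real.sqrt ((m : ℝ) ^ (j+3)) := by rw [hm1']; exact hkey

theorem clique_count_bound {V : Type*} [Fintype V] [DecidableEq V]
    (G : SimpleGraph V) [DecidableRel G.Adj] (k : ℕ) (hk : 2 ≤ k) :
    ((G.cliqueFinset k).card : ℝ) ≤ (G.edgeFinset.card : ℝ) ^ ((k : ℝ) / 2) := by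
  have h := kkb_aux (k + G.edgeFinset.card) G k hk le_rfl
  have : ((G.edgeFinset.card : ℝ)) ^ ((k : ℝ)/2) = Real.sqrt ((G.edgeFinset.card : ℝ) ^ k) := by
    rw [show ((k : ℝ)/2) = (k : ℝ) * (1/2) by ring, Real.rpow_mul (Nat.cast_nonneg _),
      Real.rpow_natCast, Real.sqrt_eq_rpow]
  rw [this]
  exact h
end

section
/- A finite simple graph with m edges contains at most m^(3/2) triangles. -/
open Finset

lemma choose2_two (j : ℕ) : 2 * (j + 2).choose 2 = (j + 2) * (j + 1) := by
  induction j with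
  | zero => decide
  | succ j ih =>
    have e1 : j + 1 + 2 = (j + 2) + 1 := by omega
    rw [e1, Nat.choose_succ_succ, Nat.choose_one_right]
    zify at ih ⊢
    linear_combination ih

lemma choose3_six (j : ℕ) : 6 * (j + 3).choose 3 = (j + 3) * (j + 2) * (j + 1) := by
  induction j with
  | zero => decide
  | succ j ih =>
    have e1 : j + 1 + 3 = (j + 3) + 1 := by omega
    rw [e1, Nat.choose_succ_succ]
    have h2 := choose2_two (j + 1)
    rw [show j + 1 + 2 = j + 3 from by omega] at h2
    zify at ih h2 ⊢
    linear_combination ih + 3 * h2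

lemma lb3 (j : ℕ) : j + 1 ≤ (j + 3).choose 3 := by
  have := choose3_six j
  nlinarith [sq_nonneg j]

lemma choose3_strict {a b : ℕ} (h2 : 2 ≤ a) (hab : a < b) : a.choose 3 < b.choose 3 := by
  have h1 : a.choose 3 < (a + 1).choose 3 := by
    have h : (a + 1).choose 3 = a.choose 2 + a.choose 3 := Nat.choose_succ_succ a 2
    have hpos : 0 < a.choose 2 := Nat.choose_pos h2
    omega
  exact h1.trans_le (Nat.choose_le_choose 3 hab)

lemma keyineq (j : ℕ) : ((j + 4).choose 3) ^ 2 ≤ ((j + 3).choose 2) ^ 3 := by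
  have h3 : 6 * (j + 4).choose 3 = (j + 4) * (j + 3) * (j + 2) := by
    have := choose3_six (j + 1)
    rwa [show j + 1 + 3 = j + 4 from by omega, show j + 1 + 2 = j + 3 from by omega,
      show j + 1 + 1 = j + 2 from by omega] at this
  have h2 : 2 * (j + 3).choose 2 = (j + 3) * (j + 2) := by
    have := choose2_two (j + 1)
    rwa [show j + 1 + 2 = j + 3 from by omega, show j + 1 + 1 = j + 2 from by omega] at this
  have key : 288 * ((j + 4).choose 3) ^ 2 ≤ 288 * ((j + 3).choose 2) ^ 3 := by
    zify at h3 h2 ⊢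
    have hq : 8 * ((j:ℤ) + 4) ^ 2 ≤ 36 * (((j:ℤ) + 3) * ((j:ℤ) + 2)) := by nlinarith
    calc 288 * ((j + 4).choose 3 : ℤ) ^ 2 = 8 * (6 * ((j + 4).choose 3 : ℤ)) ^ 2 := by ring
    _ = 8 * (((j:ℤ) + 4) * ((j:ℤ) + 3) * ((j:ℤ) + 2)) ^ 2 := by rw [h3]
    _ = (8 * ((j:ℤ) + 4) ^ 2) * (((j:ℤ) + 3) * ((j:ℤ) + 2)) ^ 2 := by ring
    _ ≤ (36 * (((j:ℤ) + 3) * ((j:ℤ) + 2))) * (((j:ℤ) + 3) * ((j:ℤ) + 2)) ^ 2 :=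
        mul_le_mul_of_nonneg_right hq (by positivity)
    _ = 36 * (2 * ((j + 3).choose 2 : ℤ)) ^ 3 := by rw [h2]; ring
    _ = 288 * ((j + 3).choose 2 : ℤ) ^ 3 := by ring
  omega

open Finset

attribute [-instance] instDecidableEqFin

open scoped FinsetFamily

theorem triangle_count_bound {V : Type*} [Fintype V] [DecidableEq V]
    (G : SimpleGraph V) [DecidableRel G.Adj] :
    ((G.cliqueFinset 3).card : ℝ) ≤ (G.edgeFinset.card : ℝ) ^ ((3 : ℝ) / 2) := by
  set T := (G.cliqueFinset 3).card with hT
  set m := G.edgeFinset.card with hm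
  rcases Nat.eq_zero_or_pos T with h0 | hTpos
  · rw [h0]; push_cast; positivity
  set n := Fintype.card V with hn
  set e := Fintype.equivFin V with he
  set 𝒜 : Finset (Finset (Fin n)) :=
    (G.cliqueFinset 3).image (fun s => s.map e.toEmbedding) with h𝒜def
  have hcard𝒜 : 𝒜.card = T :=
    Finset.card_image_of_injective _ (Finset.map_injective e.toEmbedding)
  have hsized : (↑𝒜 : Set (Finset (Fin n))).Sized 3 := by
    intro s hs
    simp only [h𝒜def, coe_image, Set.mem_image, mem_coe] at hs
    obtain ⟨t, ht, rfl⟩ := hs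
    rw [Finset.card_map]
    exact (SimpleGraph.mem_cliqueFinset_iff.1 ht).card_eq
  -- shadow bound
  have hshadow : (∂ 𝒜).card ≤ m := by
    apply Finset.card_le_card_of_surjOn
      (Sym2.lift ⟨fun a b => ({e a, e b} : Finset (Fin n)), fun a b => Finset.pair_comm _ _⟩)
    intro B hB
    rw [Finset.mem_coe, Finset.mem_shadow_iff] at hB
    obtain ⟨s, hs, x, hxs, hBeq⟩ := hB
    simp only [h𝒜def, Finset.mem_image] at hs
    obtain ⟨t, htc, rfl⟩ := hs
    have htcl := SimpleGraph.mem_cliqueFinset_iff.1 htc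
    have hBcard : B.card = 2 := by
      rw [← hBeq, Finset.card_erase_of_mem hxs, Finset.card_map, htcl.card_eq]
    obtain ⟨p, q, hpq, hBpq⟩ := Finset.card_eq_two.1 hBcard
    have hBsub : B ⊆ t.map e.toEmbedding := by
      rw [← hBeq]; exact Finset.erase_subset _ _
    have hp : p ∈ t.map e.toEmbedding := hBsub (by rw [hBpq]; exact Finset.mem_insert_self _ _)
    have hq : q ∈ t.map e.toEmbedding := hBsub (by
      rw [hBpq]; exact Finset.mem_insert_of_mem (Finset.mem_singleton_self _))
    rw [Finset.mem_map] at hp hq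
    obtain ⟨u, hu, rfl⟩ := hp
    obtain ⟨v, hv, rfl⟩ := hq
    have huv : u ≠ v := fun h => hpq (by rw [h])
    have hadj : G.Adj u v := htcl.isClique (Finset.mem_coe.2 hu) (Finset.mem_coe.2 hv) huv
    refine ⟨s(u, v), ?_, ?_⟩
    · rw [Finset.mem_coe, SimpleGraph.mem_edgeFinset]
      exact hadj
    · rw [Sym2.lift_mk, hBpq]
      rfl
  -- T ≤ choose n 3
  have hTn : T ≤ n.choose 3 := by
    rw [← hcard𝒜]
    calc 𝒜.card ≤ ((univ : Finset (Fin n)).powersetCard 3).card := by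
          apply Finset.card_le_card
          intro s hs
          rw [Finset.mem_powersetCard]
          exact ⟨Finset.subset_univ _, hsized hs⟩
    _ = n.choose 3 := by rw [Finset.card_powersetCard, Finset.card_univ, Fintype.card_fin]
  have hn3 : 3 ≤ n := by
    obtain ⟨t, ht⟩ := Finset.card_pos.1 (hT ▸ hTpos)
    calc 3 = t.card := ((SimpleGraph.mem_cliqueFinset_iff.1 ht).card_eq).symm
    _ ≤ n := by rw [hn, ← Finset.card_univ]; exact Finset.card_le_card (Finset.subset_univ _)
  -- define k
  set P : ℕ → Prop := fun k => k.choose 3 ≤ T with hP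
  have hP3 : P 3 := by simpa [hP] using Nat.one_le_iff_ne_zero.mpr hTpos.ne'
  have hbound : ∀ k, P k → k ≤ T + 2 := by
    intro k hk
    rcases Nat.lt_or_ge k 3 with h | h
    · omega
    · have := lb3 (k - 3)
      rw [show k - 3 + 3 = k from by omega] at this
      simp only [hP] at hk
      omega
  set k := Nat.findGreatest P (T + 2) with hk
  have hPk : P k := Nat.findGreatest_spec (m := 3) (by omega) hP3
  have h3k : 3 ≤ k := Nat.le_findGreatest (by omega) hP3
  have hkT : k ≤ T + 2 := Nat.findGreatest_le _
  have hkn : k ≤ n := by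
    by_contra h
    push_neg at h
    have : n.choose 3 < k.choose 3 := choose3_strict (by omega) h
    simp only [hP] at hPk
    omega
  have hTlt : T < (k + 1).choose 3 := by
    rcases Nat.lt_or_ge (k + 1) (T + 3) with h | h
    · have h2 := Nat.findGreatest_is_greatest (show k < k + 1 by omega)
        (show k + 1 ≤ T + 2 by omega)
      simp only [hP, not_le] at h2
      omega
    · -- k = T + 2
      have hkeq : k = T + 2 := by omega
      have hpas : (k + 1).choose 3 = k.choose 2 + k.choose 3 := Nat.choose_succ_succ k 2
      have hpos : 0 < k.choose 2 := Nat.choose_pos (by omega)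
      have := lb3 (k - 3)
      rw [show k - 3 + 3 = k from by omega] at this
      simp only [hP] at hPk
      omega
  -- KK
  have hKK : k.choose 2 ≤ (∂ 𝒜).card := by
    have := Finset.kruskal_katona_lovasz_form (i := 1) (r := 3) (k := k) (n := n)
      (by norm_num) h3k hkn hsized (by rw [hcard𝒜]; simp only [hP] at hPk; exact hPk)
    simpa using this
  have hkm : k.choose 2 ≤ m := le_trans hKK hshadow
  -- key inequality
  have hkey : ((k + 1).choose 3) ^ 2 ≤ (k.choose 2) ^ 3 := by
    have := keyineq (k - 3)
    rwa [show k - 3 + 4 = k + 1 from by omega, show k - 3 + 3 = k from by omega] at this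
  -- conclude
  have hcube : ((k + 1).choose 3 : ℝ) ^ 2 ≤ (m : ℝ) ^ 3 := by
    have h1 : ((k + 1).choose 3) ^ 2 ≤ m ^ 3 :=
      le_trans hkey (Nat.pow_le_pow_left hkm 3)
    exact_mod_cast h1
  have hrw : (m : ℝ) ^ ((3 : ℝ) / 2) = Real.sqrt ((m : ℝ) ^ 3) := by
    rw [Real.sqrt_eq_rpow, ← Real.rpow_natCast (m : ℝ) 3, ← Real.rpow_mul (by positivity)]
    norm_num
  have hfin : ((k + 1).choose 3 : ℝ) ≤ (m : ℝ) ^ ((3 : ℝ) / 2) := by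
    rw [hrw, show (((k + 1).choose 3 : ℝ)) = Real.sqrt (((k + 1).choose 3 : ℝ) ^ 2) from
      (Real.sqrt_sq (by positivity)).symm]
    exact Real.sqrt_le_sqrt hcube
  calc (T : ℝ) ≤ ((k + 1).choose 3 : ℝ) := by exact_mod_cast hTlt.le
  _ ≤ (m : ℝ) ^ ((3 : ℝ) / 2) := hfin
end

section
/- Let B be an n × n matrix with nonnegative real entries such that every row sum and every column sum equals 1 (B is doubly stochastic). Then there exists a permutation σ of {1, ..., n} such that B[i, σ(i)] > 0 for every i. -/
theorem doubly_stochastic_positive_diagonal (n : ℕ) (B : Matrix (Fin n) (Fin n) ℝ)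
    (hnn : ∀ i j, 0 ≤ B i j)
    (hrow : ∀ i, ∑ j, B i j = 1) (hcol : ∀ j, ∑ i, B i j = 1) :
    ∃ σ : Equiv.Perm (Fin n), ∀ i, 0 < B i (σ i) := by
  have hB : B ∈ doublyStochastic ℝ (Fin n) :=
    mem_doublyStochastic_iff_sum.2 ⟨hnn, hrow, hcol⟩
  obtain ⟨w, hw0, hw1, hwB⟩ := exists_eq_sum_perm_of_mem_doublyStochastic hB
  have : ∃ σ : Equiv.Perm (Fin n), 0 < w σ := by
    by_contra h
    push_neg at h
    have : ∑ σ : Equiv.Perm (Fin n), w σ = 0 :=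
      Finset.sum_eq_zero fun σ _ => le_antisymm (h σ) (hw0 σ)
    simp [this] at hw1
  obtain ⟨σ, hσ⟩ := this
  refine ⟨σ, fun i => ?_⟩
  have hBe : B i (σ i) = ∑ τ : Equiv.Perm (Fin n), w τ * (τ.permMatrix ℝ) i (σ i) := by
    rw [← hwB]; simp [Matrix.sum_apply]
  rw [hBe]
  have h1 : w σ * (σ.permMatrix ℝ) i (σ i) = w σ := by
    simp [Equiv.Perm.permMatrix, PEquiv.toMatrix_apply, Equiv.toPEquiv_apply]
  calc (0:ℝ) < w σ := hσ
    _ = w σ * (σ.permMatrix ℝ) i (σ i) := h1.symm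
    _ ≤ ∑ τ : Equiv.Perm (Fin n), w τ * (τ.permMatrix ℝ) i (σ i) := by
        apply Finset.single_le_sum (f := fun τ : Equiv.Perm (Fin n) => w τ * (τ.permMatrix ℝ) i (σ i))
        · intro τ _
          apply mul_nonneg (hw0 τ)
          simp only [Equiv.Perm.permMatrix, PEquiv.toMatrix_apply]
          split <;> simp
        · exact Finset.mem_univ σ
end
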